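/- For all bimoulds A and B, one has push(swamu(A,B)) = answamu(push(B), push(A)). -/

import Mathlib

/-- A bimould: a function assigning to every finite sequence of pairs `(u, v)` of
elements of `K` an element of `R`. -/
abbrev Bimould (K R : Type*) := List (K × K) → R

variable {K R : Type*} [CommRing K] [CommRing R]

/-- The (non-commutative) mould product `mu`:
`mu(A,B)(w) = Σ_{w = a·b} A(a) B(b)` over all prefix/suffix decompositions of `w`. -/
def mu (A B : Bimould K R) : Bimould K R :=
  fun w => ∑ i ∈ Finset.range (w.length + 1), A (w.take i) * B (w.drop i)

/-- The sequence transformation underlying `swap`: for `w = ((u_1,v_1),…,(u_r,v_r))` it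
returns `((v_r, u_1+⋯+u_r), (v_{r-1}-v_r, u_1+⋯+u_{r-1}), …, (v_1-v_2, u_1))`. -/
def swapSeq (w : List (K × K)) : List (K × K) :=
  List.ofFn fun i : Fin w.length =>
    ((w.getD (w.length - 1 - (i : ℕ)) (0, 0)).2 - (w.getD (w.length - (i : ℕ)) (0, 0)).2,
      ((w.take (w.length - (i : ℕ))).map Prod.fst).sum)

/-- The involution `swap`. -/
def swap (A : Bimould K R) : Bimould K R := fun w => A (swapSeq w)

/-- The involution `anti`, reversing the sequence of letters. -/
def anti (A : Bimould K R) : Bimould K R := fun w => A w.reverse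

/-- `swamu`, the `swap`-conjugation of `mu`. -/
def swamu (A B : Bimould K R) : Bimould K R := swap (mu (swap A) (swap B))

/-- `answamu`, the `swap ∘ anti`-conjugation of `mu`. -/
def answamu (A B : Bimould K R) : Bimould K R :=
  anti (swap (mu (swap (anti A)) (swap (anti B))))

/-- The `push` operator:
`push(A)((u_1,v_1),…,(u_r,v_r)) = A((-u_1-⋯-u_r, -v_r), (u_1, v_1-v_r), …, (u_{r-1}, v_{r-1}-v_r))`
and `push(A)(∅) = A(∅)`. -/
def push (A : Bimould K R) : Bimould K R := fun w =>
  match w with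
  | [] => A []
  | x :: xs =>
      let v : K := ((x :: xs).getD ((x :: xs).length - 1) (0, 0)).2
      A ((-((x :: xs).map Prod.fst).sum, -v) ::
          ((x :: xs).take ((x :: xs).length - 1)).map fun p => (p.1, p.2 - v))

/-!
In the coordinates `U_k = u_1 + ⋯ + u_k` (`0 ≤ k ≤ r`) and `v_k` (`1 ≤ k ≤ r + 1`, with
`v_{r+1} = 0`) of a sequence of length `r`, `swap` reverses the two coordinate sequences and
exchanges them. A direct computation in these coordinates gives Écalle's factorisation
`push = anti ∘ swap ∘ anti ∘ neg ∘ swap`, where `neg` negates every letter. As `swap` and `anti`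
are involutions, `neg` is multiplicative for `mu` and `anti` reverses the order of the factors,
substituting this factorisation into both sides of the identity makes them agree.
-/

/-- For `w = ((u_1,v_1),…,(u_r,v_r))`: `partialSum w k = u_1 + ⋯ + u_k` and `vAt w k = v_{k+1}`,
read as `0` past the end of `w`. -/
def partialSum (w : List (K × K)) (k : ℕ) : K := ((w.take k).map Prod.fst).sum

def vAt (w : List (K × K)) (k : ℕ) : K := (w.getD k (0, 0)).2

@[simp] lemma partialSum_zero (w : List (K × K)) : partialSum w 0 = 0 := by
  simp [partialSum]

lemma partialSum_succ {w : List (K × K)} {k : ℕ} (hk : k < w.length) :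
    partialSum w (k + 1) = partialSum w k + w[k].1 := by
  rw [partialSum, partialSum, List.take_add_one, List.getElem?_eq_getElem hk, List.map_append,
    List.sum_append]
  simp

lemma vAt_of_lt {w : List (K × K)} {k : ℕ} (hk : k < w.length) : vAt w k = w[k].2 := by
  rw [vAt, List.getD_eq_getElem _ _ hk]

lemma vAt_of_length_le {w : List (K × K)} {k : ℕ} (hk : w.length ≤ k) : vAt w k = 0 := by
  rw [vAt, List.getD_eq_default _ _ hk]

lemma partialSum_map_neg (w : List (K × K)) (k : ℕ) :
    partialSum (w.map Neg.neg) k = -partialSum w k := by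
  simp [partialSum, ← List.map_take, List.sum_neg, Function.comp_def]

lemma vAt_map_neg (w : List (K × K)) (k : ℕ) : vAt (w.map Neg.neg) k = -vAt w k := by
  rcases lt_or_ge k w.length with hk | hk
  · rw [vAt_of_lt (by simpa using hk), vAt_of_lt hk, List.getElem_map, Prod.snd_neg]
  · rw [vAt_of_length_le (by simpa using hk), vAt_of_length_le hk, neg_zero]

lemma partialSum_reverse (w : List (K × K)) (k : ℕ) :
    partialSum w.reverse k = partialSum w w.length - partialSum w (w.length - k) := by
  have := List.sum_take_add_sum_drop (w.map Prod.fst) (w.length - k)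
  simp only [partialSum, List.take_reverse, List.map_reverse, List.sum_reverse, List.take_length,
    ← List.map_drop, ← List.map_take] at this ⊢
  rw [← this, add_sub_cancel_left]

lemma vAt_reverse {w : List (K × K)} {k : ℕ} (hk : k < w.length) :
    vAt w.reverse k = vAt w (w.length - 1 - k) := by
  rw [vAt_of_lt (by simpa using hk), vAt_of_lt (by omega), List.getElem_reverse]

@[simp] lemma length_swapSeq (w : List (K × K)) : (swapSeq w).length = w.length := by
  simp [swapSeq]

lemma getElem_swapSeq {w : List (K × K)} {k : ℕ} (hk : k < (swapSeq w).length) :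
    (swapSeq w)[k] =
      (vAt w (w.length - 1 - k) - vAt w (w.length - k), partialSum w (w.length - k)) := by
  simp [swapSeq, vAt, partialSum]

lemma partialSum_swapSeq {w : List (K × K)} {k : ℕ} (hk : k ≤ w.length) :
    partialSum (swapSeq w) k = vAt w (w.length - k) := by
  induction k with
  | zero => simp [vAt_of_length_le]
  | succ k ih =>
    rw [partialSum_succ (by simpa using hk), ih (by omega), getElem_swapSeq,
      show w.length - (k + 1) = w.length - 1 - k by omega]
    ring

lemma vAt_swapSeq {w : List (K × K)} {k : ℕ} (hk : k ≤ w.length) :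
    vAt (swapSeq w) k = partialSum w (w.length - k) := by
  rcases hk.lt_or_eq with hk | rfl
  · rw [vAt_of_lt (by simpa using hk), getElem_swapSeq]
  · rw [vAt_of_length_le (by simp), Nat.sub_self, partialSum_zero]

lemma swapSeq_swapSeq (w : List (K × K)) : swapSeq (swapSeq w) = w := by
  refine List.ext_getElem (by simp) fun k hk _ => ?_
  have hk : k < w.length := by simpa using hk
  rw [getElem_swapSeq, length_swapSeq, vAt_swapSeq (by omega), vAt_swapSeq (by omega),
    partialSum_swapSeq (by omega), Nat.sub_sub_self (by omega),
    show w.length - (w.length - 1 - k) = k + 1 by omega, partialSum_succ hk, vAt_of_lt hk]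
  simp

-- Copied from `push`, so that `push A w = A (pushSeq w)` holds definitionally.
def pushSeq : List (K × K) → List (K × K)
  | [] => []
  | x :: xs =>
      let v : K := ((x :: xs).getD ((x :: xs).length - 1) (0, 0)).2
      (-((x :: xs).map Prod.fst).sum, -v) ::
        ((x :: xs).take ((x :: xs).length - 1)).map fun p => (p.1, p.2 - v)

lemma pushSeq_of_ne_nil {w : List (K × K)} (hw : w ≠ []) :
    pushSeq w = (-partialSum w w.length, -vAt w (w.length - 1)) ::
      (w.take (w.length - 1)).map fun p => (p.1, p.2 - vAt w (w.length - 1)) := by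
  cases w with
  | nil => exact absurd rfl hw
  | cons x xs => simp only [pushSeq, partialSum, vAt, List.take_length]

lemma swapSeq_map_neg_reverse (w : List (K × K)) :
    swapSeq (w.reverse.map Neg.neg) = pushSeq (swapSeq w).reverse := by
  rcases eq_or_ne w [] with rfl | hw
  · rfl
  have hr : 0 < w.length := List.length_pos_iff.mpr hw
  rw [pushSeq_of_ne_nil (List.ne_nil_of_length_pos (by simpa using hr))]
  refine List.ext_getElem (by simp; omega) fun k hk _ => ?_
  simp only [List.length_map, List.length_reverse, length_swapSeq] at hk ⊢
  rw [getElem_swapSeq]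
  simp only [List.length_map, List.length_reverse, vAt_map_neg, partialSum_map_neg,
    partialSum_reverse, Nat.sub_sub_self hk.le]
  rw [vAt_reverse (by omega), show w.length - 1 - (w.length - 1 - k) = k by omega]
  cases k with
  | zero =>
    rw [vAt_of_length_le (w := w.reverse) (by simp), List.getElem_cons_zero,
      vAt_reverse (by simp; omega)]
    simp [partialSum_swapSeq, vAt_swapSeq]
  | succ k =>
    rw [vAt_reverse (by simp; omega), List.getElem_cons_succ, List.getElem_map, List.getElem_take,
      List.getElem_reverse, getElem_swapSeq, vAt_reverse (by simp; omega)]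
    simp only [length_swapSeq, Nat.sub_self, Prod.mk.injEq]
    rw [show w.length - 1 - (w.length - 1 - k) = k by omega,
      show w.length - 1 - (w.length - (k + 1)) = k by omega,
      show w.length - (w.length - 1 - k) = k + 1 by omega, vAt_swapSeq (by omega), Nat.sub_zero]
    constructor <;> ring

lemma pushSeq_eq_swapSeq (w : List (K × K)) :
    pushSeq w = swapSeq ((swapSeq w.reverse).reverse.map Neg.neg) := by
  rw [swapSeq_map_neg_reverse, swapSeq_swapSeq, List.reverse_reverse]

def neg (A : Bimould K R) : Bimould K R := fun w => A (w.map Neg.neg)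

omit [CommRing R] in
lemma swap_swap (A : Bimould K R) : swap (swap A) = A := by
  funext w
  simp only [swap, swapSeq_swapSeq]

omit [CommRing K] [CommRing R] in
lemma anti_anti (A : Bimould K R) : anti (anti A) = A := by
  funext w
  simp only [anti, List.reverse_reverse]

lemma neg_mu (A B : Bimould K R) : neg (mu A B) = mu (neg A) (neg B) := by
  funext w
  simp only [neg, mu, List.length_map, List.map_take, List.map_drop]

omit [CommRing K] in
lemma anti_mu (A B : Bimould K R) : anti (mu A B) = mu (anti B) (anti A) := by
  funext w
  simp only [anti, mu, List.length_reverse, List.take_reverse, List.drop_reverse]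
  rw [← Finset.sum_range_reflect]
  refine Finset.sum_congr rfl fun i hi => ?_
  rw [Finset.mem_range] at hi
  rw [mul_comm, Nat.add_sub_cancel, Nat.sub_sub_self (by omega)]

omit [CommRing R] in
lemma push_eq_anti_swap_anti_neg_swap (A : Bimould K R) :
    push A = anti (swap (anti (neg (swap A)))) := by
  funext w
  cases w with
  | nil => rfl
  | cons x xs => exact congrArg A (pushSeq_eq_swapSeq (x :: xs))

/-- `push(swamu(A,B)) = answamu(push(B), push(A))`. -/
theorem stmt_9 (A B : Bimould K R) :
    push (swamu A B) = answamu (push B) (push A) := by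
  simp only [swamu, answamu, push_eq_anti_swap_anti_neg_swap, swap_swap, anti_anti, neg_mu,
    anti_mu]
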